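/- A consequence relation ⊢ on a sentential language is substitution-invariant, monotonic, reflexive and transitive if and only if it has a strong intersective pure semantics, i.e. a strong semantics whose truth-relation is the intersection of a family of mixed truth-relations |≡_{D_p^λ,D_c^λ} with D_p^λ = D_c^λ for every λ. -/

import Mathlib

universe u v w x

/-- Mixed truth-relation. -/
def Mixed {V : Type*} (Dp Dc : Set V) (γ δ : Set V) : Prop :=
  γ ⊆ Dp → (δ ∩ Dc).Nonempty

def Monotonic {L : Type*} (Cons : Set L → Set L → Prop) : Prop :=
  ∀ ⦃Γ₁ Γ₂ Δ₁ Δ₂ : Set L⦄, Γ₁ ⊆ Γ₂ → Δ₁ ⊆ Δ₂ → Cons Γ₁ Δ₁ → Cons Γ₂ Δ₂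

def ReflRel {L : Type*} (Cons : Set L → Set L → Prop) : Prop :=
  ∀ F : L, Cons {F} {F}

def TransRel {L : Type*} (Cons : Set L → Set L → Prop) : Prop :=
  ∀ Γ Δ : Set L, ¬ Cons Γ Δ →
    ∃ Γ' Δ' : Set L, Γ ⊆ Γ' ∧ Δ ⊆ Δ' ∧ ¬ Cons Γ' Δ' ∧ Γ' ∪ Δ' = Set.univ

def LRPermeable {L : Type*} (Cons : Set L → Set L → Prop) : Prop :=
  ∀ Γ Δ S : Set L, Cons (Γ ∪ S) Δ → Cons Γ (S ∪ Δ)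

def RLPermeable {L : Type*} (Cons : Set L → Set L → Prop) : Prop :=
  ∀ Γ Δ S : Set L, Cons Γ (S ∪ Δ) → Cons (Γ ∪ S) Δ

def Permeable {L : Type*} (Cons : Set L → Set L → Prop) : Prop :=
  LRPermeable Cons ∨ RLPermeable Cons

def CompactRel {L : Type*} (Cons : Set L → Set L → Prop) : Prop :=
  ∀ Γ Δ : Set L, Cons Γ Δ →
    ∃ Γ' Δ' : Set L, Γ' ⊆ Γ ∧ Δ' ⊆ Δ ∧ Γ'.Finite ∧ Δ'.Finite ∧ Cons Γ' Δ'

/-- Sound and complete intersective mixed semantics. -/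
def IsIMS {L V W Λ : Type*} (Cons : Set L → Set L → Prop)
    (interp : L → W → V) (Dp Dc : Λ → Set V) : Prop :=
  ∀ Γ Δ : Set L, Cons Γ Δ ↔
    ∀ (w : W) (l : Λ), Mixed (Dp l) (Dc l)
      ((fun F => interp F w) '' Γ) ((fun F => interp F w) '' Δ)

/-- Sound and complete mixed semantics (single pair). -/
def IsMixedSem {L V W : Type*} (Cons : Set L → Set L → Prop)
    (interp : L → W → V) (Dp Dc : Set V) : Prop :=
  ∀ Γ Δ : Set L, Cons Γ Δ ↔
    ∀ w : W, Mixed Dp Dc ((fun F => interp F w) '' Γ) ((fun F => interp F w) '' Δ)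

/-- Formulae of a sentential language. -/
inductive Formula (A : Type u) (C : Type u) (ar : C → ℕ) : Type u
  | atom : A → Formula A C ar
  | conn : (c : C) → (Fin (ar c) → Formula A C ar) → Formula A C ar

/-- Substitution induced by a map from atoms to formulae. -/
def Formula.subst {A C : Type u} {ar : C → ℕ} (σ : A → Formula A C ar) :
    Formula A C ar → Formula A C ar
  | .atom a => σ a
  | .conn c Fs => .conn c (fun i => (Fs i).subst σ)

def SubstInvariant {A C : Type u} {ar : C → ℕ}
    (Cons : Set (Formula A C ar) → Set (Formula A C ar) → Prop) : Prop :=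
  ∀ (σ : A → Formula A C ar) (Γ Δ : Set (Formula A C ar)),
    Cons Γ Δ → Cons (Formula.subst σ '' Γ) (Formula.subst σ '' Δ)

/-- Evaluation of formulae from truth-functions and a valuation. -/
def evalF {A C : Type u} {ar : C → ℕ} {V : Type v}
    (tf : (c : C) → (Fin (ar c) → V) → V) (v : A → V) : Formula A C ar → V
  | .atom a => v a
  | .conn c Fs => tf c (fun i => evalF tf v (Fs i))

/-- Truth-functionality of an interpretation w.r.t. truth-functions. -/
def Compositional {A C : Type u} {ar : C → ℕ} {V : Type v} {W : Type w}
    (interp : Formula A C ar → W → V)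
    (tf : (c : C) → (Fin (ar c) → V) → V) : Prop :=
  ∀ (c : C) (Fs : Fin (ar c) → Formula A C ar) (w : W),
    interp (Formula.conn c Fs) w = tf c (fun i => interp (Fs i) w)

/-- Regular connectives. -/
def RegularRel {A C : Type u} {ar : C → ℕ}
    (Cons : Set (Formula A C ar) → Set (Formula A C ar) → Prop) : Prop :=
  ∀ c : C, ∃ Bp Bc : Set (Set (Fin (ar c)) × Set (Fin (ar c))),
    ∀ (Γ Δ : Set (Formula A C ar)) (Fs : Fin (ar c) → Formula A C ar),
      (Cons (Γ ∪ {Formula.conn c Fs}) Δ ↔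
        ∀ B ∈ Bp, Cons (Γ ∪ Fs '' B.1) (Fs '' B.2 ∪ Δ)) ∧
      (Cons Γ ({Formula.conn c Fs} ∪ Δ) ↔
        ∀ B ∈ Bc, Cons (Γ ∪ Fs '' B.1) (Fs '' B.2 ∪ Δ))

/-!
Soundness: in a pure relation `|≡_{D,D}` a counter-world `(v, D)` to `Γ ⊢ Δ` splits the
formulae into those valued in `D` and the rest, which is the saturated counter-pair that
transitivity asks for; and substituting `σ` and then evaluating at `v` is evaluating at the
valuation `a ↦ ⟦σ a⟧(v)`, which gives substitution-invariance.

Completeness: take the formulae themselves as truth values and each connective as its own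
truth-function, so that valuations are substitutions, and designate one set `Γ'` for every
underivable pair `Γ' ⊬ Δ'` with `Γ' ∪ Δ' = L`. Transitivity provides such a pair refuting
any underivable `Γ ⊢ Δ`, and substitution-invariance with monotonicity makes every
valuation respect the derivable ones.
-/

section Semantics

variable {L V W Λ : Type*} {Cons : Set L → Set L → Prop} {interp : L → W → V}
  {Dp Dc : Λ → Set V}

theorem IsIMS.monotonic (h : IsIMS Cons interp Dp Dc) : Monotonic Cons := by
  intro Γ₁ Γ₂ Δ₁ Δ₂ hΓ hΔ hcons
  rw [h] at hcons ⊢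
  intro w l hγ
  obtain ⟨x, hxΔ, hxD⟩ := hcons w l ((Set.image_mono hΓ).trans hγ)
  exact ⟨x, Set.image_mono hΔ hxΔ, hxD⟩

theorem IsIMS.reflRel (h : IsIMS Cons interp Dp Dc) (hD : ∀ l, Dp l ⊆ Dc l) :
    ReflRel Cons := by
  intro F
  rw [h]
  intro w l hγ
  exact ⟨interp F w, ⟨F, rfl, rfl⟩, hD l (hγ ⟨F, rfl, rfl⟩)⟩

theorem IsIMS.transRel (h : IsIMS Cons interp Dp Dc) (hD : ∀ l, Dc l ⊆ Dp l) :
    TransRel Cons := by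
  intro Γ Δ hΓΔ
  simp only [h Γ Δ, Mixed, not_forall, Set.not_nonempty_iff_eq_empty] at hΓΔ
  obtain ⟨w, l, hΓ, hΔ⟩ := hΓΔ
  refine ⟨{F | interp F w ∈ Dp l}, {F | interp F w ∉ Dc l}, ?_, ?_, ?_, ?_⟩
  · exact fun F hF => hΓ ⟨F, hF, rfl⟩
  · exact fun F hF hFD => (Set.eq_empty_iff_forall_notMem.1 hΔ) _ ⟨⟨F, hF, rfl⟩, hFD⟩
  · simp only [h _ _, Mixed, not_forall]
    refine ⟨w, l, fun _ ⟨F, hF, hx⟩ => hx ▸ hF, ?_⟩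
    rintro ⟨_, ⟨F, hF, rfl⟩, hFD⟩
    exact hF hFD
  · exact Set.eq_univ_of_forall fun F => (em (interp F w ∈ Dc l)).imp (hD l ·) id

end Semantics

section Representation

variable {L : Type*} {Cons : Set L → Set L → Prop}

variable (Cons) in
def UnderivableCover : Type _ :=
  {p : Set L × Set L // ¬ Cons p.1 p.2 ∧ p.1 ∪ p.2 = Set.univ}

theorem cons_iff_forall_underivableCover (hmono : Monotonic Cons) (hrefl : ReflRel Cons)
    (htrans : TransRel Cons) (Γ Δ : Set L) :
    Cons Γ Δ ↔ ∀ p : UnderivableCover Cons, Mixed p.1.1 p.1.1 Γ Δ := by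
  constructor
  · rintro hΓΔ ⟨⟨Γ', Δ'⟩, hΓ'Δ', hcover⟩ hΓ
    by_contra hdisj
    have hΔ : Δ ⊆ Δ' := fun F hF =>
      (hcover ▸ Set.mem_univ F : F ∈ Γ' ∪ Δ').resolve_left fun hF' => hdisj ⟨F, hF, hF'⟩
    exact hΓ'Δ' (hmono hΓ hΔ hΓΔ)
  · intro h
    by_contra hΓΔ
    obtain ⟨Γ', Δ', hΓ, hΔ, hΓ'Δ', hcover⟩ := htrans Γ Δ hΓΔ
    obtain ⟨F, hFΔ, hFΓ'⟩ := h ⟨(Γ', Δ'), hΓ'Δ', hcover⟩ hΓ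
    exact hΓ'Δ' (hmono (Set.singleton_subset_iff.2 hFΓ')
      (Set.singleton_subset_iff.2 (hΔ hFΔ)) (hrefl F))

end Representation

section TermModel

variable {A C : Type u} {ar : C → ℕ}
  {Cons : Set (Formula A C ar) → Set (Formula A C ar) → Prop}

theorem Formula.subst_atom (F : Formula A C ar) : F.subst Formula.atom = F := by
  induction F with
  | atom a => rfl
  | conn c Fs ih => exact congrArg (Formula.conn c) (funext ih)

theorem evalF_subst {V : Type v} (tf : (c : C) → (Fin (ar c) → V) → V) (v : A → V)
    (σ : A → Formula A C ar) (F : Formula A C ar) :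
    evalF tf v (F.subst σ) = evalF tf (fun a => evalF tf v (σ a)) F := by
  induction F with
  | atom a => rfl
  | conn c Fs ih => exact congrArg (tf c) (funext ih)

theorem evalF_conn (σ : A → Formula A C ar) (F : Formula A C ar) :
    evalF Formula.conn σ F = F.subst σ := by
  induction F with
  | atom a => rfl
  | conn c Fs ih => exact congrArg (Formula.conn c) (funext ih)

theorem IsIMS.substInvariant {V Λ : Type*} {tf : (c : C) → (Fin (ar c) → V) → V}
    {Dp Dc : Λ → Set V}
    (h : IsIMS Cons (fun F v => evalF tf v F) Dp Dc) : SubstInvariant Cons := by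
  intro σ Γ Δ hcons
  rw [h] at hcons ⊢
  intro v
  simpa only [Set.image_image, evalF_subst] using hcons fun a => evalF tf v (σ a)

theorem SubstInvariant.cons_iff_forall_subst (hsub : SubstInvariant Cons)
    (Γ Δ : Set (Formula A C ar)) :
    Cons Γ Δ ↔
      ∀ σ : A → Formula A C ar, Cons (Formula.subst σ '' Γ) (Formula.subst σ '' Δ) := by
  refine ⟨fun h σ => hsub σ Γ Δ h, fun h => ?_⟩
  simpa only [Formula.subst_atom, Set.image_id'] using h Formula.atom

end TermModel

/-- substitution-invariance + monotonicity + reflexivity +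
transitivity is equivalent to the existence of a strong intersective pure
semantics. -/
theorem statement_8 {A C : Type u} (ar : C → ℕ)
    (Cons : Set (Formula A C ar) → Set (Formula A C ar) → Prop) :
    (SubstInvariant Cons ∧ Monotonic Cons ∧ ReflRel Cons ∧ TransRel Cons) ↔
      ∃ (V : Type u) (tf : (c : C) → (Fin (ar c) → V) → V)
        (Λ : Type u) (Dp Dc : Λ → Set V),
        (∀ l : Λ, Dp l = Dc l) ∧
        ∀ Γ Δ : Set (Formula A C ar), Cons Γ Δ ↔
          ∀ (v : A → V) (l : Λ),
            Mixed (Dp l) (Dc l)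
              ((fun F => evalF tf v F) '' Γ) ((fun F => evalF tf v F) '' Δ) := by
  constructor
  · rintro ⟨hsub, hmono, hrefl, htrans⟩
    refine ⟨Formula A C ar, Formula.conn, UnderivableCover Cons, fun p => p.1.1, fun p => p.1.1,
      fun _ => rfl, fun Γ Δ => ?_⟩
    simp only [evalF_conn]
    rw [hsub.cons_iff_forall_subst]
    simp only [cons_iff_forall_underivableCover hmono hrefl htrans]
  · rintro ⟨V, tf, Λ, Dp, Dc, hD, hsem⟩
    have h : IsIMS Cons (fun F v => evalF tf v F) Dp Dc := hsem
    exact ⟨h.substInvariant, h.monotonic, h.reflRel fun l => (hD l).le,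
      h.transRel fun l => (hD l).ge⟩
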